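/- Let k, ℓ be real numbers and define q_n = t_n − k and r_n = t_n + ℓ for all n ≥ 0, and let λ(s;k,ℓ) = 2^s − (2^s(k − ℓ) + (k + ℓ)). If s is a complex number with Re(s) > 1 and λ(s;k,ℓ) = 2^s, then (2^s + 1)·∑_{n≥1} q_{n-1}/n^s + (2^s − 1)·∑_{n≥1} r_n/n^s = 2^s·ζ(s). -/

import Mathlib

open Complex

/-- The Thue-Morse sequence: binary digit sum of `n` modulo 2. -/
def tm (n : ℕ) : ℕ := (Nat.digits 2 n).sum % 2

/-- The ±1 Thue-Morse sequence `ε n = (-1)^(t n)`. -/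
noncomputable def eps (n : ℕ) : ℂ := (-1) ^ tm n

lemma tm_lt_two (n : ℕ) : tm n < 2 := Nat.mod_lt _ (by norm_num)

lemma tm_two_mul (n : ℕ) : tm (2 * n) = tm n := by
  rcases Nat.eq_zero_or_pos n with h | h
  · simp [h]
  · unfold tm
    rw [Nat.digits_def' (by norm_num : 1 < 2) (by omega)]
    rw [show (2 * n) % 2 = 0 from by omega, show (2 * n) / 2 = n from by omega]
    simp

lemma tm_two_mul_add_one (n : ℕ) : tm (2 * n + 1) = (tm n + 1) % 2 := by
  unfold tm
  rw [Nat.digits_def' (by norm_num : 1 < 2) (by omega)]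
  rw [show (2 * n + 1) % 2 = 1 from by omega, show (2 * n + 1) / 2 = n from by omega]
  simp [Nat.add_mod, Nat.add_comm]

lemma tm_odd_c (n : ℕ) : (tm (2 * n + 1) : ℂ) = 1 - (tm n : ℂ) := by
  have h := tm_two_mul_add_one n
  have h2 := tm_lt_two n
  have : tm n = 0 ∨ tm n = 1 := by omega
  rcases this with h0 | h0 <;> rw [h, h0] <;> norm_num

set_option maxHeartbeats 1000000 in
theorem stmt_13 (k l : ℝ) (s : ℂ) (hs : 1 < s.re)
    (hl : (2 : ℂ) ^ s - (2 ^ s * ((k : ℂ) - l) + ((k : ℂ) + l)) = 2 ^ s) :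
    (2 ^ s + 1) * (∑' n : ℕ, ((tm n : ℂ) - (k : ℂ)) / ((n : ℂ) + 1) ^ s) +
      (2 ^ s - 1) * (∑' n : ℕ, ((tm (n + 1) : ℂ) + (l : ℂ)) / ((n : ℂ) + 1) ^ s) =
    2 ^ s * riemannZeta s := by
  have h2 : (2 : ℂ) ^ s ≠ 0 := by
    rw [Complex.cpow_def_of_ne_zero (by norm_num)]
    exact Complex.exp_ne_zero _
  set w : ℕ → ℂ := fun n => 1 / ((n : ℂ) + 1) ^ s with hw_def
  have hw : Summable w := by
    have h0 := (Complex.summable_one_div_nat_cpow (p := s)).mpr hs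
    have h1 : Summable (fun n : ℕ => 1 / ((n + 1 : ℕ) : ℂ) ^ s) :=
      (summable_nat_add_iff 1).mpr h0
    refine h1.congr fun n => ?_
    simp [hw_def]
  have hbound : ∀ a : ℕ → ℂ, (∀ n, ‖a n‖ ≤ 1) → Summable (fun n => a n * w n) := by
    intro a ha
    refine Summable.of_norm_bounded (g := fun n => ‖w n‖) (summable_norm_iff.mpr hw) fun n => ?_
    rw [norm_mul]
    exact mul_le_of_le_one_left (norm_nonneg _) (ha n)
  have htm_norm : ∀ n : ℕ, ‖((tm n : ℂ))‖ ≤ 1 := by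
    intro n
    rw [Complex.norm_natCast]
    exact_mod_cast Nat.lt_succ_iff.mp (tm_lt_two n)
  have hfA : Summable (fun n => (tm n : ℂ) * w n) := hbound _ htm_norm
  have hfB : Summable (fun n => (tm (n + 1) : ℂ) * w n) := hbound _ fun n => htm_norm (n + 1)
  have hsplit : ∀ f : ℕ → ℂ, Summable f →
      (∑' i, f (2 * i)) + (∑' i, f (2 * i + 1)) = ∑' i, f i := by
    intro f hf
    exact tsum_even_add_odd
      (hf.comp_injective (fun a b h => by dsimp at h; omega : Function.Injective fun i : ℕ => 2 * i))
      (hf.comp_injective (fun a b h => by dsimp at h; omega : Function.Injective fun i : ℕ => 2 * i + 1))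
  -- pointwise facts
  have hw_odd : ∀ i : ℕ, w (2 * i + 1) = (1 / 2 ^ s) * w i := by
    intro i
    simp only [hw_def]
    rw [div_mul_div_comm, one_mul]
    congr 1
    have h1 : (((2 * i + 1 : ℕ) : ℂ) + 1) = ((2 : ℝ) : ℂ) * (((i : ℝ) + 1 : ℝ) : ℂ) := by
      push_cast; ring
    rw [h1, Complex.mul_cpow_ofReal_nonneg (by norm_num) (by positivity)]
    norm_cast
  set u : ℕ → ℂ := fun i => w (2 * i) with hu_def
  set Z := ∑' n, w n with hZ_def
  set A := ∑' n, (tm n : ℂ) * w n with hA_def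
  set B := ∑' n, (tm (n + 1) : ℂ) * w n with hB_def
  set H := ∑' i, (tm i : ℂ) * u i with hH_def
  set K := ∑' i, u i with hK_def
  have hsum_u : Summable u :=
    hw.comp_injective (fun a b h => by dsimp at h; omega : Function.Injective fun i : ℕ => 2 * i)
  have hsum_tu : Summable (fun i => (tm i : ℂ) * u i) := by
    refine Summable.of_norm_bounded (g := fun n => ‖u n‖) (summable_norm_iff.mpr hsum_u) fun n => ?_
    rw [norm_mul]
    exact mul_le_of_le_one_left (norm_nonneg _) (htm_norm n)
  -- equation for Z
  have eZ : K + (1 / 2 ^ s) * Z = Z := by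
    have := hsplit w hw
    rw [show (∑' i, w (2 * i + 1)) = (1 / 2 ^ s) * Z by
      rw [hZ_def, ← tsum_mul_left]; exact tsum_congr hw_odd] at this
    exact this
  -- equation for A
  have eA : H + (1 / 2 ^ s) * (Z - A) = A := by
    have := hsplit (fun n => (tm n : ℂ) * w n) hfA
    rw [show (∑' i, (tm (2 * i) : ℂ) * w (2 * i)) = H by
      exact tsum_congr fun i => by rw [tm_two_mul]] at this
    rw [show (∑' i, (tm (2 * i + 1) : ℂ) * w (2 * i + 1)) = (1 / 2 ^ s) * (Z - A) by
      rw [hZ_def, hA_def, ← Summable.tsum_sub hw hfA, ← tsum_mul_left]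
      exact tsum_congr fun i => by rw [tm_odd_c, hw_odd]; ring] at this
    exact this
  -- equation for B
  have eB : (K - H) + (1 / 2 ^ s) * B = B := by
    have := hsplit (fun n => (tm (n + 1) : ℂ) * w n) hfB
    rw [show (∑' i, (tm (2 * i + 1) : ℂ) * w (2 * i)) = K - H by
      rw [hK_def, hH_def, ← Summable.tsum_sub hsum_u hsum_tu]
      exact tsum_congr fun i => by rw [tm_odd_c]; ring] at this
    rw [show (∑' i, (tm (2 * i + 1 + 1) : ℂ) * w (2 * i + 1)) = (1 / 2 ^ s) * B by
      rw [hB_def, ← tsum_mul_left]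
      refine tsum_congr fun i => ?_
      rw [show 2 * i + 1 + 1 = 2 * (i + 1) from by ring, tm_two_mul, hw_odd]
      ring] at this
    exact this
  have hc : (2 : ℂ) ^ s * (1 / 2 ^ s) = 1 := mul_one_div_cancel h2
  -- rewrite the goal
  rw [zeta_eq_tsum_one_div_nat_add_one_cpow hs]
  have e1 : (∑' n : ℕ, ((tm n : ℂ) - (k : ℂ)) / ((n : ℂ) + 1) ^ s) = A - (k : ℂ) * Z := by
    rw [hA_def, hZ_def, ← tsum_mul_left, ← Summable.tsum_sub hfA (hw.mul_left _)]
    refine tsum_congr fun n => ?_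
    simp only [hw_def]
    ring
  have e2 : (∑' n : ℕ, ((tm (n + 1) : ℂ) + (l : ℂ)) / ((n : ℂ) + 1) ^ s) = B + (l : ℂ) * Z := by
    rw [hB_def, hZ_def, ← tsum_mul_left, ← Summable.tsum_add hfB (hw.mul_left _)]
    refine tsum_congr fun n => ?_
    simp only [hw_def]
    ring
  rw [e1, e2, show (∑' n : ℕ, 1 / ((n : ℂ) + 1) ^ s) = Z from rfl]
  linear_combination (-(2:ℂ)^s) * eA + (-(2:ℂ)^s) * eB + ((2:ℂ)^s) * eZ + (B - A) * hc + Z * hl
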